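/- arXiv:1408.2675 — 2 statements merged into one kernel-verified Lean document; each statement's English description precedes it below -/
import Mathlib

section
/- Fix an integer N ≥ 1, a real sequence (f_k)_{k≥0}, and weight parameters η_k ∈ [0,1). Let T̄_k be defined by T̄_0 = f_0, T̄_k = (1−η_{k−1}) f_k + η_{k−1} T̄_{k−1} for 1 ≤ k ≤ N−1, and T̄_k = Σ_{j=0}^{N−1} (η_{k−1}⋯η_{k−j})(1−η_{k−j−1}) f_{k−j} + (η_{k−1}⋯η_{k−N}) f_{k−N} for k ≥ N (empty product equal to 1), and set f_{l(k)} = max_{0≤j≤min(k,N)} f_{k−j}. Define the nonmonotone term by T_0 = f_0, T_k = f_k + η_{k−1}(T̄_k − f_k) for 1 ≤ k ≤ N−1, and T_k = max{T̄_k, f_k} for k ≥ N. If in addition f_{k+1} ≤ T_k for all k ≥ 0 (as is guaranteed by the acceptance test of the nonmonotone Armijo-type line search, since σ α ⟨g_k, d_k⟩ < 0), then f_k ≤ T_k ≤ f_{l(k)} for all k ≥ 0. -/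
/-!
While `k < N` both terms move along segments: `T̄_{k+1} = f_{k+1} + η_k (T̄_k - f_{k+1})` and
`T_k = f_k + η_{k-1} (T̄_k - f_k)`. Since acceptance gives `f_{k+1} ≤ T_k`, induction keeps
`f_k ≤ T_k ≤ T̄_k ≤ T̄_0 = f_0`, and `f_0` lies in the window defining `f_{l(k)}`.
For `k ≥ N`, `T̄_k` is a convex combination of `f_k, …, f_{k-N}`: the weights
`(∏_{i<j} a_i)(1 - a_j)` and `∏_{i<N} a_i`, where `a_i = η_{k-1-i}`, telescope to `1`.
-/

open Finset

lemma add_mul_sub_mem_Icc {a b t : ℝ} (hab : a ≤ b) (ht0 : 0 ≤ t) (ht1 : t ≤ 1) :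
    a + t * (b - a) ∈ Set.Icc a b :=
  ⟨by nlinarith, by nlinarith⟩

lemma sum_prod_mul_one_sub_add_prod {R : Type*} [CommRing R] (a : ℕ → R) (n : ℕ) :
    ∑ j ∈ range n, (∏ i ∈ range j, a i) * (1 - a j) + ∏ i ∈ range n, a i = 1 := by
  have htel : ∀ j, (∏ i ∈ range j, a i) * (1 - a j) =
      ∏ i ∈ range j, a i - ∏ i ∈ range (j + 1), a i := fun j => by
    rw [prod_range_succ]; ring
  simp only [htel, sum_range_sub', range_zero, prod_empty, sub_add_cancel]

lemma sum_prod_mul_one_sub_add_prod_le {a x : ℕ → ℝ} {M : ℝ} {n : ℕ}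
    (ha0 : ∀ i, 0 ≤ a i) (ha1 : ∀ i, a i ≤ 1) (hx : ∀ j ≤ n, x j ≤ M) :
    ∑ j ∈ range n, (∏ i ∈ range j, a i) * (1 - a j) * x j + (∏ i ∈ range n, a i) * x n ≤ M :=
  calc _ ≤ ∑ j ∈ range n, (∏ i ∈ range j, a i) * (1 - a j) * M + (∏ i ∈ range n, a i) * M := by
        gcongr with j hj
        · exact mul_nonneg (prod_nonneg fun i _ => ha0 i) (sub_nonneg.2 (ha1 j))
        · exact hx j (mem_range.1 hj).le
        · exact prod_nonneg fun i _ => ha0 i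
        · exact hx n le_rfl
    _ = M := by rw [← sum_mul, ← add_mul, sum_prod_mul_one_sub_add_prod, one_mul]

lemma f_le_T_le_Tbar_le_f_zero {N : ℕ} {f η Tbar T : ℕ → ℝ}
    (hη0 : ∀ k, 0 ≤ η k) (hη1 : ∀ k, η k ≤ 1) (hT0 : Tbar 0 = f 0) (hT0' : T 0 = f 0)
    (hTrec : ∀ k, k + 1 < N → Tbar (k + 1) = (1 - η k) * f (k + 1) + η k * Tbar k)
    (hTlt : ∀ k, k + 1 < N → T (k + 1) = f (k + 1) + η k * (Tbar (k + 1) - f (k + 1)))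
    (haccept : ∀ k, f (k + 1) ≤ T k) :
    ∀ k < N, f k ≤ T k ∧ T k ≤ Tbar k ∧ Tbar k ≤ f 0 := by
  intro k hk
  induction k with
  | zero => simp [hT0, hT0']
  | succ k ih =>
    obtain ⟨-, hTTb, hTbf⟩ := ih (by omega)
    have hfTb : f (k + 1) ≤ Tbar k := (haccept k).trans hTTb
    have hTbar : Tbar (k + 1) = f (k + 1) + η k * (Tbar k - f (k + 1)) := by
      rw [hTrec k hk]; ring
    obtain ⟨hfTb1, hTb1Tb⟩ := hTbar ▸ add_mul_sub_mem_Icc hfTb (hη0 k) (hη1 k)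
    obtain ⟨hfT1, hT1Tb1⟩ := hTlt k hk ▸ add_mul_sub_mem_Icc hfTb1 (hη0 k) (hη1 k)
    exact ⟨hfT1, hT1Tb1, hTb1Tb.trans hTbf⟩

theorem fk_le_Tk_le_flk'_general (N : ℕ) (f η : ℕ → ℝ)
    (hη : ∀ k, η k ∈ Set.Ico (0 : ℝ) 1)
    (Tbar T fl : ℕ → ℝ)
    (hfl : ∀ k, fl k =
      (Finset.range (min k N + 1)).sup' Finset.nonempty_range_add_one (fun j => f (k - j)))
    (hT0 : Tbar 0 = f 0)
    (hTrec : ∀ k, 1 ≤ k → k ≤ N - 1 →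
      Tbar k = (1 - η (k - 1)) * f k + η (k - 1) * Tbar (k - 1))
    (hTsum : ∀ k, N ≤ k → Tbar k =
      (∑ j ∈ Finset.range N,
          (∏ i ∈ Finset.range j, η (k - 1 - i)) * (1 - η (k - j - 1)) * f (k - j))
        + (∏ i ∈ Finset.range N, η (k - 1 - i)) * f (k - N))
    (hT0' : T 0 = f 0)
    (hTlt : ∀ k, 1 ≤ k → k ≤ N - 1 → T k = f k + η (k - 1) * (Tbar k - f k))
    (hTge : ∀ k, N ≤ k → T k = max (Tbar k) (f k))
    (haccept : ∀ k, f (k + 1) ≤ T k) :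
    ∀ k, f k ≤ T k ∧ T k ≤ fl k := by
  have hη0 : ∀ k, 0 ≤ η k := fun k => (hη k).1
  have hη1 : ∀ k, η k ≤ 1 := fun k => (hη k).2.le
  have hwindow : ∀ k j, j ≤ min k N → f (k - j) ≤ fl k := fun k j hj =>
    hfl k ▸ le_sup' (fun j => f (k - j)) (mem_range.2 (Nat.lt_succ_of_le hj))
  intro k
  rcases lt_or_ge k N with hk | hk
  · obtain ⟨hfT, hTTb, hTbf⟩ := f_le_T_le_Tbar_le_f_zero hη0 hη1 hT0 hT0'
      (fun k hk => by simpa using hTrec (k + 1) (by omega) (by omega))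
      (fun k hk => by simpa using hTlt (k + 1) (by omega) (by omega)) haccept k hk
    have hf0 : f 0 ≤ fl k := by simpa using hwindow k k (by omega)
    exact ⟨hfT, hTTb.trans (hTbf.trans hf0)⟩
  · have hTbfl : Tbar k ≤ fl k := by
      rw [hTsum k hk]
      simp only [Nat.sub_right_comm k _ 1]
      exact sum_prod_mul_one_sub_add_prod_le (fun _ => hη0 _) (fun _ => hη1 _)
        fun j hj => hwindow k j (by omega)
    rw [hTge k hk]
    exact ⟨le_max_right _ _, max_le hTbfl (by simpa using hwindow k 0 (Nat.zero_le _))⟩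

/-- Lemma 1 for the nonmonotone term (10): with `f_{l(k)} = max_{0≤j≤min(k,N)} f_{k-j}`,
`T_0 = f_0`, `T_k = f_k + η_{k-1}(T̄_k - f_k)` for `1 ≤ k ≤ N-1` and
`T_k = max{T̄_k, f_k}` for `k ≥ N`, assuming moreover `f_{k+1} ≤ T_k` for all `k`
(as guaranteed by the acceptance test of the nonmonotone Armijo-type line search),
one has `f_k ≤ T_k ≤ f_{l(k)}` for all `k ≥ 0`. -/
theorem fk_le_Tk_le_flk' (N : ℕ) (hN : 1 ≤ N) (f η : ℕ → ℝ)
    (hη : ∀ k, η k ∈ Set.Ico (0 : ℝ) 1)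
    (Tbar T fl : ℕ → ℝ)
    (hfl : ∀ k, fl k =
      (Finset.range (min k N + 1)).sup' Finset.nonempty_range_add_one (fun j => f (k - j)))
    (hT0 : Tbar 0 = f 0)
    (hTrec : ∀ k, 1 ≤ k → k ≤ N - 1 →
      Tbar k = (1 - η (k - 1)) * f k + η (k - 1) * Tbar (k - 1))
    (hTsum : ∀ k, N ≤ k → Tbar k =
      (∑ j ∈ Finset.range N,
          (∏ i ∈ Finset.range j, η (k - 1 - i)) * (1 - η (k - j - 1)) * f (k - j))
        + (∏ i ∈ Finset.range N, η (k - 1 - i)) * f (k - N))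
    (hT0' : T 0 = f 0)
    (hTlt : ∀ k, 1 ≤ k → k ≤ N - 1 → T k = f k + η (k - 1) * (Tbar k - f k))
    (hTge : ∀ k, N ≤ k → T k = max (Tbar k) (f k))
    (haccept : ∀ k, f (k + 1) ≤ T k) :
    ∀ k, f k ≤ T k ∧ T k ≤ fl k :=
  fk_le_Tk_le_flk'_general N f η hη Tbar T fl hfl hT0 hTrec hTsum hT0' hTlt hTge haccept
end

section
/- Let n ≥ 1 and let f : ℝⁿ → ℝ be continuously differentiable with gradient g. Fix s ∈ (0,1], ρ ∈ (0,1), σ ∈ (0,1/2), an integer N ≥ 1, and weights η_k ∈ [0,1). Let x_{k+1} = x_k + α_k d_k, where α_k = s ρ^{j_k} and j_k is the smallest j ∈ ℕ with f(x_k + s ρ^j d_k) ≤ T_k + σ s ρ^j ⟨g(x_k), d_k⟩; here f_k = f(x_k), T̄_0 = f_0, T̄_k = (1−η_{k−1}) f_k + η_{k−1} T̄_{k−1} for 1 ≤ k ≤ N−1, T̄_k = Σ_{j=0}^{N−1}(η_{k−1}⋯η_{k−j})(1−η_{k−j−1}) f_{k−j} + (η_{k−1}⋯η_{k−N}) f_{k−N}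 for k ≥ N, and the nonmonotone term is T_0 = f_0, T_k = f_k + η_{k−1}(T̄_k − f_k) for 1 ≤ k ≤ N−1, T_k = max{T̄_k, f_k} for k ≥ N. Assume (H1) the level set L(x_0) = {x ∈ ℝⁿ : f(x) ≤ f(x_0)} is bounded; (H2) there exist an open convex set C ⊇ L(x_0) and L > 0 with ‖g(x) − g(y)‖ ≤ L‖x − y‖ for all x, y ∈ C; and (H3) there exist 0 < c₁ < 1 < c₂ with ⟨g(x_k), d_k⟩ ≤ −c₁‖g(x_k)‖² and ‖d_k⟩ ≤ c₂‖g(x_k)‖ for all k. Then lim_{k→∞} ‖g(x_k)‖ = 0. -/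
/-!
Along the iterates the reference value satisfies `f x_k ≤ T_k ≤ M_k`, where `M_k` is the largest
of the last `min k N + 1` values of `f`: for `k ≥ N`, `T̄_k` is a convex combination of them, and
for `k < N` the recursion keeps `T_k` between `f x_k` and `T̄_k`. Hence `M_k` is nonincreasing, the
iterates stay in the compact level set, and near that set the Lipschitz gradient gives a uniform
lower bound `ᾱ` on the backtracked steps, so `f x_{k+1} ≤ M_k - σ ᾱ c₁ ‖g x_k‖²`. The argument of
Grippo, Lampariello and Lucidi finishes: `M_k` converges, and walking back from the indices where
the maximum is attained one step at a time, uniform continuity of `f` shows that `‖g‖` tends to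
zero along each of the lags `1, …, N + 1` behind them, which together cover every index.
-/

open Filter Finset Topology

noncomputable def windowMax (N : ℕ) (u : ℕ → ℝ) (k : ℕ) : ℝ :=
  (range (min k N + 1)).sup' nonempty_range_add_one fun i => u (k - i)

section windowMax

variable {N : ℕ} {u : ℕ → ℝ} {k i : ℕ}

theorem le_windowMax (hi : i ≤ min k N) : u (k - i) ≤ windowMax N u k :=
  le_sup' (fun i => u (k - i)) (mem_range_succ_iff.2 hi)

theorem le_windowMax_self : u k ≤ windowMax N u k :=
  le_windowMax (Nat.zero_le _)

theorem exists_eq_windowMax (N : ℕ) (u : ℕ → ℝ) (k : ℕ) :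
    ∃ i ≤ min k N, u (k - i) = windowMax N u k := by
  obtain ⟨i, hi, h⟩ := exists_mem_eq_sup' nonempty_range_add_one fun i => u (k - i)
  exact ⟨i, mem_range_succ_iff.1 hi, h.symm⟩

@[simp]
theorem windowMax_zero : windowMax N u 0 = u 0 := by
  simp [windowMax]

theorem windowMax_le_windowMax_succ (hk : k < N) : windowMax N u k ≤ windowMax N u (k + 1) :=
  sup'_le _ _ fun i hi => by
    simpa [show k + 1 - (i + 1) = k - i by omega] using
      le_windowMax (u := u) (k := k + 1) (i := i + 1) (by simp at hi; omega)

theorem windowMax_succ_le (h : u (k + 1) ≤ windowMax N u k) :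
    windowMax N u (k + 1) ≤ windowMax N u k :=
  sup'_le _ _ fun i hi => by
    rcases i with _ | i
    · exact h
    · simpa [show k + 1 - (i + 1) = k - i by omega] using le_windowMax (by simp at hi; omega)

theorem antitone_windowMax (h : ∀ k, u (k + 1) ≤ windowMax N u k) : Antitone (windowMax N u) :=
  antitone_nat_of_succ_le fun k => windowMax_succ_le (h k)

theorem le_apply_zero_of_le_windowMax (h : ∀ k, u (k + 1) ≤ windowMax N u k) (k : ℕ) :
    u k ≤ u 0 :=
  calc u k ≤ windowMax N u k := le_windowMax_self
    _ ≤ windowMax N u 0 := antitone_windowMax h (Nat.zero_le k)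
    _ = u 0 := windowMax_zero

end windowMax

theorem UniformContinuousOn.tendsto_dist_comp {X Y ι : Type*} [PseudoMetricSpace X]
    [PseudoMetricSpace Y] {f : X → Y} {s : Set X} {l : Filter ι} {p q : ι → X}
    (hf : UniformContinuousOn f s) (hp : ∀ i, p i ∈ s) (hq : ∀ i, q i ∈ s)
    (h : Tendsto (fun i => dist (p i) (q i)) l (𝓝 0)) :
    Tendsto (fun i => dist (f (p i)) (f (q i))) l (𝓝 0) :=
  tendsto_uniformity_iff_dist_tendsto_zero.1 <| Tendsto.comp (f := fun i => (p i, q i)) hf <|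
    tendsto_inf.2 ⟨tendsto_uniformity_iff_dist_tendsto_zero.2 h,
      tendsto_principal.2 (Eventually.of_forall fun i => Set.mk_mem_prod (hp i) (hq i))⟩

theorem tendsto_zero_of_tendsto_comp_sub_lag {a : ℕ → ℝ} (ha : ∀ k, 0 ≤ a k) {N : ℕ}
    {o : ℕ → ℕ} (ho : ∀ k, o k ≤ N) (h : ∀ j, Tendsto (fun k => a (k - o k - (j + 1))) atTop (𝓝 0)) :
    Tendsto a atTop (𝓝 0) := by
  have hsum : Tendsto (fun k => ∑ j ∈ range (N + 1), a (k + (N + 1) - o (k + (N + 1)) - (j + 1)))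
      atTop (𝓝 0) := by
    simpa only [Function.comp_def, sum_const_zero] using
      tendsto_finsetSum (range (N + 1)) fun j _ => (h j).comp (tendsto_add_atTop_nat (N + 1))
  refine squeeze_zero ha (fun k => ?_) hsum
  obtain ⟨j, hjN, hj⟩ : ∃ j ≤ N, k + (N + 1) - o (k + (N + 1)) - (j + 1) = k :=
    ⟨N - o (k + (N + 1)), by omega, by have := ho (k + (N + 1)); omega⟩
  calc a k = a (k + (N + 1) - o (k + (N + 1)) - (j + 1)) := by rw [hj]
    _ ≤ ∑ j ∈ range (N + 1), a (k + (N + 1) - o (k + (N + 1)) - (j + 1)) :=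
        single_le_sum (f := fun j => a (k + (N + 1) - o (k + (N + 1)) - (j + 1)))
          (fun j _ => ha _) (mem_range.2 (by omega))

section NonmonotoneDecrease

variable {X : Type*} [PseudoMetricSpace X] {f : X → ℝ} {x : ℕ → X} {a : ℕ → ℝ} {N : ℕ}
  {c C m : ℝ}

theorem tendsto_comp_of_tendsto_comp_succ (hc : 0 < c) (ha : ∀ k, 0 ≤ a k)
    (hf : UniformContinuousOn f (Set.range x)) (hstep : ∀ k, dist (x (k + 1)) (x k) ≤ C * a k)
    (hdec : ∀ k, f (x (k + 1)) ≤ windowMax N (fun k => f (x k)) k - c * a k ^ 2)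
    (hM : Tendsto (windowMax N fun k => f (x k)) atTop (𝓝 m)) {ψ : ℕ → ℕ}
    (hψ : Tendsto ψ atTop atTop) (hsucc : Tendsto (fun k => f (x (ψ k + 1))) atTop (𝓝 m)) :
    Tendsto (fun k => a (ψ k)) atTop (𝓝 0) ∧ Tendsto (fun k => f (x (ψ k))) atTop (𝓝 m) := by
  have hsq : Tendsto (fun k => c * a (ψ k) ^ 2) atTop (𝓝 0) := by
    refine squeeze_zero (fun k => by positivity) (fun k => ?_) (by simpa using (hM.comp hψ).sub hsucc)
    linarith [hdec (ψ k)]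
  have haψ : Tendsto (fun k => a (ψ k)) atTop (𝓝 0) := by
    simpa [hc.ne', Real.sqrt_sq (ha _)] using (hsq.const_mul c⁻¹).sqrt
  refine ⟨haψ, hsucc.congr_dist ?_⟩
  refine hf.tendsto_dist_comp (fun k => Set.mem_range_self _) (fun k => Set.mem_range_self _) ?_
  exact squeeze_zero (fun k => dist_nonneg) (fun k => hstep (ψ k)) (by simpa using haψ.const_mul C)

theorem tendsto_zero_of_le_windowMax_sub (hc : 0 < c) (ha : ∀ k, 0 ≤ a k)
    (hf : UniformContinuousOn f (Set.range x)) (hbdd : BddBelow (Set.range fun k => f (x k)))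
    (hstep : ∀ k, dist (x (k + 1)) (x k) ≤ C * a k)
    (hdec : ∀ k, f (x (k + 1)) ≤ windowMax N (fun k => f (x k)) k - c * a k ^ 2) :
    Tendsto a atTop (𝓝 0) := by
  set M := windowMax N fun k => f (x k)
  have hManti : Antitone M :=
    antitone_windowMax fun k => (hdec k).trans (sub_le_self _ (by positivity))
  have hMbdd : BddBelow (Set.range M) := by
    obtain ⟨B, hB⟩ := hbdd
    exact ⟨B, by rintro _ ⟨k, rfl⟩; exact (hB ⟨k, rfl⟩).trans (le_windowMax_self : _ ≤ M k)⟩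
  have hM := tendsto_atTop_ciInf hManti hMbdd
  choose o ho hoM using exists_eq_windowMax N (fun k => f (x k))
  have hlag : ∀ j, Tendsto (fun k => f (x (k - o k - j))) atTop (𝓝 (⨅ k, M k)) →
      Tendsto (fun k => a (k - o k - (j + 1))) atTop (𝓝 0) ∧
        Tendsto (fun k => f (x (k - o k - (j + 1)))) atTop (𝓝 (⨅ k, M k)) := fun j hj =>
    tendsto_comp_of_tendsto_comp_succ hc ha hf hstep hdec hM
      (tendsto_atTop_mono (fun k => by have := ho k; omega) (tendsto_sub_atTop_nat (N + (j + 1))))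
      (hj.congr' <| (eventually_ge_atTop (N + (j + 1))).mono fun k hk => by
        have := ho k
        dsimp only
        rw [show k - o k - (j + 1) + 1 = k - o k - j by omega])
  have hP : ∀ j, Tendsto (fun k => f (x (k - o k - j))) atTop (𝓝 (⨅ k, M k)) := by
    intro j
    induction j with
    | zero => simpa [hoM] using hM
    | succ j ih => exact (hlag j ih).2
  exact tendsto_zero_of_tendsto_comp_sub_lag ha (fun k => (ho k).trans (min_le_right _ _))
    fun j => (hlag j (hP j)).1

end NonmonotoneDecrease

theorem sum_prod_mul_one_sub_add_prod_le_s11 {p v : ℕ → ℝ} {B : ℝ} (N : ℕ)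
    (hp : ∀ i, p i ∈ Set.Icc (0 : ℝ) 1) (hv : ∀ j ≤ N, v j ≤ B) :
    ∑ j ∈ range N, (∏ i ∈ range j, p i) * (1 - p j) * v j + (∏ i ∈ range N, p i) * v N ≤ B := by
  set P : ℕ → ℝ := fun j => ∏ i ∈ range j, p i
  have hP : ∀ j, 0 ≤ P j := fun j => prod_nonneg fun i _ => (hp i).1
  have hstep : ∀ j, P j * (1 - p j) = P j - P (j + 1) := fun j => by
    simp only [P, prod_range_succ]; ring
  calc ∑ j ∈ range N, P j * (1 - p j) * v j + P N * v N
      ≤ ∑ j ∈ range N, P j * (1 - p j) * B + P N * B := by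
        gcongr with j hj
        · exact mul_nonneg (hP j) (sub_nonneg.2 (hp j).2)
        · exact hv j (mem_range.1 hj).le
        · exact hP N
        · exact hv N le_rfl
    _ = B := by simp only [hstep, ← sum_mul, sum_range_sub' P]; simp [P]; ring

structure IsNonmonotoneTerm (N : ℕ) (η u Tbar T : ℕ → ℝ) : Prop where
  tbar_zero : Tbar 0 = u 0
  tbar_of_lt : ∀ k, 1 ≤ k → k ≤ N - 1 →
    Tbar k = (1 - η (k - 1)) * u k + η (k - 1) * Tbar (k - 1)
  tbar_of_ge : ∀ k, N ≤ k → Tbar k =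
    (∑ j ∈ range N, (∏ i ∈ range j, η (k - 1 - i)) * (1 - η (k - j - 1)) * u (k - j))
      + (∏ i ∈ range N, η (k - 1 - i)) * u (k - N)
  zero : T 0 = u 0
  of_lt : ∀ k, 1 ≤ k → k ≤ N - 1 → T k = u k + η (k - 1) * (Tbar k - u k)
  of_ge : ∀ k, N ≤ k → T k = max (Tbar k) (u k)

namespace IsNonmonotoneTerm

variable {N : ℕ} {η u Tbar T : ℕ → ℝ}

theorem tbar_le_windowMax (h : IsNonmonotoneTerm N η u Tbar T)
    (hη : ∀ k, η k ∈ Set.Icc (0 : ℝ) 1) {k : ℕ} (hk : N ≤ k) : Tbar k ≤ windowMax N u k := by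
  rw [h.tbar_of_ge k hk]
  simp_rw [show ∀ j, k - j - 1 = k - 1 - j from fun j => Nat.sub_right_comm k j 1]
  exact sum_prod_mul_one_sub_add_prod_le_s11 (p := fun i => η (k - 1 - i)) (v := fun j => u (k - j))
    N (fun i => hη _) fun j hj => le_windowMax (by omega)

theorem bounds_of_le_pred (h : IsNonmonotoneTerm N η u Tbar T)
    (hη : ∀ k, η k ∈ Set.Icc (0 : ℝ) 1) (hdesc : ∀ k, u (k + 1) ≤ T k) :
    ∀ k ≤ N - 1, u k ≤ T k ∧ T k ≤ Tbar k ∧ Tbar k ≤ windowMax N u k := by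
  intro k hk
  induction k with
  | zero => simp [h.zero, h.tbar_zero]
  | succ k ih =>
    obtain ⟨-, hTk, hTbark⟩ := ih (by omega)
    obtain ⟨hη0, hη1⟩ := hη k
    have hu : u (k + 1) ≤ Tbar k := (hdesc k).trans hTk
    have hM : Tbar k ≤ windowMax N u (k + 1) :=
      hTbark.trans (windowMax_le_windowMax_succ (by omega))
    have hrec := h.tbar_of_lt (k + 1) (by omega) hk
    have hT := h.of_lt (k + 1) (by omega) hk
    simp only [Nat.add_sub_cancel] at hrec hT
    have hu_tbar : u (k + 1) ≤ Tbar (k + 1) := by rw [hrec]; nlinarith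
    refine ⟨by rw [hT]; nlinarith, by rw [hT]; nlinarith, ?_⟩
    rw [hrec]
    nlinarith [le_windowMax_self (N := N) (u := u) (k := k + 1)]

theorem mem_Icc_windowMax (h : IsNonmonotoneTerm N η u Tbar T)
    (hη : ∀ k, η k ∈ Set.Icc (0 : ℝ) 1) (hdesc : ∀ k, u (k + 1) ≤ T k) (k : ℕ) :
    T k ∈ Set.Icc (u k) (windowMax N u k) := by
  rcases le_or_gt N k with hk | hk
  · rw [h.of_ge k hk]
    exact ⟨le_max_right _ _, max_le (h.tbar_le_windowMax hη hk) le_windowMax_self⟩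
  · obtain ⟨hu, hT, hTbar⟩ := h.bounds_of_le_pred hη hdesc k (by omega)
    exact ⟨hu, hT.trans hTbar⟩

end IsNonmonotoneTerm

theorem min_le_mul_pow_of_isLeast {P : ℝ → Prop} {s ρ b : ℝ} {j₀ : ℕ} (hs : 0 ≤ s) (hρ : 0 ≤ ρ)
    (hj₀ : IsLeast {j : ℕ | P (s * ρ ^ j)} j₀) (hP : ∀ β ∈ Set.Icc 0 b, P β) :
    min s (ρ * b) ≤ s * ρ ^ j₀ := by
  rcases j₀ with _ | j
  · simp
  · have hj : ¬P (s * ρ ^ j) := fun hj => by have := hj₀.2 hj; omega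
    have hb : b < s * ρ ^ j := by
      by_contra! hb
      exact hj (hP _ ⟨by positivity, hb⟩)
    calc min s (ρ * b) ≤ ρ * b := min_le_right _ _
      _ ≤ ρ * (s * ρ ^ j) := by gcongr
      _ = s * ρ ^ (j + 1) := by ring

section Descent

variable {E : Type*} [NormedAddCommGroup E] [InnerProductSpace ℝ E] [CompleteSpace E]
  {f : E → ℝ} {g : E → E} {C : Set E} {L : ℝ}

theorem descent_lemma (hg : ∀ y, HasGradientAt f (g y) y)
    (hLip : ∀ a ∈ C, ∀ b ∈ C, ‖g a - g b‖ ≤ L * ‖a - b‖) {x v : E}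
    (hseg : segment ℝ x (x + v) ⊆ C) :
    f (x + v) ≤ f x + inner ℝ (g x) v + L / 2 * ‖v‖ ^ 2 := by
  have hmem : ∀ t ∈ Set.Icc (0 : ℝ) 1, x + t • v ∈ C := fun t ht =>
    hseg (by rw [segment_eq_image']; exact ⟨t, ht, by simp⟩)
  have hφ : ∀ t : ℝ, HasDerivAt (fun t => f (x + t • v)) (inner ℝ (g (x + t • v)) v) t := by
    intro t
    have hline : HasDerivAt (fun t : ℝ => x + t • v) v t := by
      simpa using ((hasDerivAt_id t).smul_const v).const_add x
    have := (hg (x + t • v)).hasFDerivAt.comp_hasDerivAt t hline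
    simp only [InnerProductSpace.toDual_apply_apply] at this
    exact this
  set ψ : ℝ → ℝ := fun t => f (x + t • v) - t * inner ℝ (g x) v - L / 2 * t ^ 2 * ‖v‖ ^ 2
  have hψ : ∀ t, HasDerivAt ψ (inner ℝ (g (x + t • v)) v - inner ℝ (g x) v - L * t * ‖v‖ ^ 2) t :=
    fun t => ((hφ t).sub ((hasDerivAt_id t).mul_const _ |>.congr_deriv (one_mul _))).sub
      ((((hasDerivAt_pow 2 t).const_mul (L / 2)).mul_const (‖v‖ ^ 2)).congr_deriv (by ring))
  have hanti : AntitoneOn ψ (Set.Icc 0 1) := by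
    refine antitoneOn_of_deriv_nonpos (convex_Icc 0 1)
      (fun t _ => (hψ t).continuousAt.continuousWithinAt)
      (fun t _ => (hψ t).differentiableAt.differentiableWithinAt) fun t ht => ?_
    rw [interior_Icc] at ht
    have hLt := hLip _ (hmem t (Set.Ioo_subset_Icc_self ht)) _ (by simpa using hmem 0 (by simp))
    rw [add_sub_cancel_left, norm_smul, Real.norm_of_nonneg ht.1.le] at hLt
    calc deriv ψ t = inner ℝ (g (x + t • v) - g x) v - L * t * ‖v‖ ^ 2 := by
          rw [(hψ t).deriv, inner_sub_left]
      _ ≤ ‖g (x + t • v) - g x‖ * ‖v‖ - L * t * ‖v‖ ^ 2 := by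
          gcongr; exact real_inner_le_norm _ _
      _ ≤ L * (t * ‖v‖) * ‖v‖ - L * t * ‖v‖ ^ 2 := by gcongr
      _ = 0 := by ring
  have := hanti (by simp) (by simp) zero_le_one
  simp [ψ] at this
  linarith

theorem armijo_of_lipschitzOn_gradient (hg : ∀ y, HasGradientAt f (g y) y)
    (hLip : ∀ a ∈ C, ∀ b ∈ C, ‖g a - g b‖ ≤ L * ‖a - b‖) (hL : 0 ≤ L) {x d : E}
    {β σ c₁ c₂ : ℝ} (hseg : segment ℝ x (x + β • d) ⊆ C) (hσ : σ ≤ 1) (hβ : 0 ≤ β)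
    (hβL : L * c₂ ^ 2 * β ≤ 2 * (1 - σ) * c₁)
    (hgd : inner ℝ (g x) d ≤ -c₁ * ‖g x‖ ^ 2) (hd : ‖d‖ ≤ c₂ * ‖g x‖) :
    f (x + β • d) ≤ f x + σ * β * inner ℝ (g x) d := by
  have hdesc := descent_lemma hg hLip hseg
  rw [inner_smul_right, norm_smul, Real.norm_of_nonneg hβ] at hdesc
  have hd2 : ‖d‖ ^ 2 ≤ c₂ ^ 2 * ‖g x‖ ^ 2 := by
    rw [← mul_pow]; exact pow_le_pow_left₀ (norm_nonneg d) hd 2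
  have : (1 - σ) * β * inner ℝ (g x) d + L / 2 * (β * ‖d‖) ^ 2 ≤ 0 := by
    calc (1 - σ) * β * inner ℝ (g x) d + L / 2 * (β * ‖d‖) ^ 2
        ≤ (1 - σ) * β * (-c₁ * ‖g x‖ ^ 2) + L / 2 * β ^ 2 * (c₂ ^ 2 * ‖g x‖ ^ 2) := by
          rw [mul_pow, ← mul_assoc (L / 2)]
          gcongr
      _ = β * ‖g x‖ ^ 2 / 2 * (L * c₂ ^ 2 * β - 2 * (1 - σ) * c₁) := by ring
      _ ≤ 0 := mul_nonpos_of_nonneg_of_nonpos (by positivity) (by linarith)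
  linarith

theorem exists_pos_forall_armijo {K : Set E} (hK : IsCompact K) (hC : IsOpen C) (hKC : K ⊆ C)
    (hg : ∀ y, HasGradientAt f (g y) y) (hLip : ∀ a ∈ C, ∀ b ∈ C, ‖g a - g b‖ ≤ L * ‖a - b‖)
    (hL : 0 < L) {σ c₁ c₂ : ℝ} (hσ : σ < 1) (hc₁ : 0 < c₁) (hc₂ : 0 < c₂) :
    ∃ b > 0, ∀ y ∈ K, ∀ d, inner ℝ (g y) d ≤ -c₁ * ‖g y‖ ^ 2 → ‖d‖ ≤ c₂ * ‖g y‖ →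
      ∀ β ∈ Set.Icc 0 b, f (y + β • d) ≤ f y + σ * β * inner ℝ (g y) d := by
  obtain ⟨δ, hδ, hδC⟩ := hK.exists_cthickening_subset_open hC hKC
  have hgC : ContinuousOn g C := (LipschitzOnWith.of_dist_le' (K := L) fun a ha b hb => by
    simpa only [dist_eq_norm] using hLip a ha b hb).continuousOn
  obtain ⟨G, hG, hgG⟩ := ((hK.image_of_continuousOn (hgC.mono hKC)).isBounded).exists_pos_norm_le
  refine ⟨min (2 * (1 - σ) * c₁ / (L * c₂ ^ 2)) (δ / (c₂ * G)), by positivity,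
    fun y hy d hgd hd β ⟨hβ, hβb⟩ => armijo_of_lipschitzOn_gradient hg hLip hL.le ?_ hσ.le hβ ?_ hgd hd⟩
  · have hβd : ‖β • d‖ ≤ δ := calc
      ‖β • d‖ = β * ‖d‖ := by rw [norm_smul, Real.norm_of_nonneg hβ]
      _ ≤ δ / (c₂ * G) * (c₂ * G) :=
          mul_le_mul (hβb.trans (min_le_right _ _))
            (hd.trans (by gcongr; exact hgG _ ⟨y, hy, rfl⟩)) (norm_nonneg d) (by positivity)
      _ = δ := by field_simp
    refine ((convex_closedBall y δ).segment_subset (Metric.mem_closedBall_self hδ.le) ?_).trans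
      ((Metric.closedBall_subset_cthickening hy δ).trans hδC)
    simpa [dist_eq_norm] using hβd
  · have := hβb.trans (min_le_left _ _)
    rw [le_div_iff₀ (by positivity)] at this
    linarith

end Descent

theorem nmls_gradient_tendsto_zero'_general (n : ℕ)
    (f : EuclideanSpace ℝ (Fin n) → ℝ)
    (g : EuclideanSpace ℝ (Fin n) → EuclideanSpace ℝ (Fin n))
    (hg : ∀ y, HasGradientAt f (g y) y)
    (s ρ σ : ℝ) (hs : s ∈ Set.Ioc (0 : ℝ) 1) (hρ : ρ ∈ Set.Ioo (0 : ℝ) 1)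
    (hσ : σ ∈ Set.Ioo (0 : ℝ) (1 / 2))
    (N : ℕ) (η : ℕ → ℝ) (hη : ∀ k, η k ∈ Set.Ico (0 : ℝ) 1)
    (x d : ℕ → EuclideanSpace ℝ (Fin n)) (α : ℕ → ℝ) (jk : ℕ → ℕ)
    (Tbar T : ℕ → ℝ)
    (hT0 : Tbar 0 = f (x 0))
    (hTrec : ∀ k, 1 ≤ k → k ≤ N - 1 →
      Tbar k = (1 - η (k - 1)) * f (x k) + η (k - 1) * Tbar (k - 1))
    (hTsum : ∀ k, N ≤ k → Tbar k =
      (∑ j ∈ Finset.range N,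
          (∏ i ∈ Finset.range j, η (k - 1 - i)) * (1 - η (k - j - 1)) * f (x (k - j)))
        + (∏ i ∈ Finset.range N, η (k - 1 - i)) * f (x (k - N)))
    (hT0' : T 0 = f (x 0))
    (hTlt : ∀ k, 1 ≤ k → k ≤ N - 1 → T k = f (x k) + η (k - 1) * (Tbar k - f (x k)))
    (hTge : ∀ k, N ≤ k → T k = max (Tbar k) (f (x k)))
    (hjk : ∀ k, IsLeast {j : ℕ | f (x k + (s * ρ ^ j) • d k) ≤
      T k + σ * (s * ρ ^ j) * (inner ℝ (g (x k)) (d k) : ℝ)} (jk k))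
    (hα : ∀ k, α k = s * ρ ^ (jk k))
    (hx : ∀ k, x (k + 1) = x k + α k • d k)
    (H1 : Bornology.IsBounded {y : EuclideanSpace ℝ (Fin n) | f y ≤ f (x 0)})
    (H2 : ∃ C : Set (EuclideanSpace ℝ (Fin n)), IsOpen C ∧ Convex ℝ C ∧
      {y : EuclideanSpace ℝ (Fin n) | f y ≤ f (x 0)} ⊆ C ∧
      ∃ L > (0 : ℝ), ∀ a ∈ C, ∀ b ∈ C, ‖g a - g b‖ ≤ L * ‖a - b‖)
    (H3 : ∃ c₁ c₂ : ℝ, 0 < c₁ ∧ c₁ < 1 ∧ 1 < c₂ ∧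
      ∀ k, (inner ℝ (g (x k)) (d k) : ℝ) ≤ -c₁ * ‖g (x k)‖ ^ 2 ∧
        ‖d k‖ ≤ c₂ * ‖g (x k)‖) :
    Filter.Tendsto (fun k => ‖g (x k)‖) Filter.atTop (nhds 0) := by
  obtain ⟨C, hC, -, hKC, L, hL, hLip⟩ := H2
  obtain ⟨c₁, c₂, hc₁, -, hc₂, hcd⟩ := H3
  obtain ⟨hs0, -⟩ := hs
  obtain ⟨hρ0, hρ1⟩ := hρ
  obtain ⟨hσ0, hσ1⟩ := hσ
  have hfc : Continuous f := continuous_iff_continuousAt.2 fun y => (hg y).continuousAt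
  have hK : IsCompact {y | f y ≤ f (x 0)} :=
    Metric.isCompact_of_isClosed_isBounded (isClosed_le hfc continuous_const) H1
  have hαs : ∀ k, 0 ≤ α k ∧ α k ≤ s := fun k =>
    hα k ▸ ⟨by positivity, mul_le_of_le_one_right hs0.le (pow_le_one₀ hρ0.le hρ1.le)⟩
  have harmijo : ∀ k, f (x (k + 1)) ≤ T k + σ * α k * inner ℝ (g (x k)) (d k) := fun k => by
    rw [hx k, hα k]; exact (hjk k).1
  have hdesc : ∀ k, f (x (k + 1)) ≤ T k := fun k => (harmijo k).trans <| add_le_of_nonpos_right <|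
    mul_nonpos_of_nonneg_of_nonpos (mul_nonneg hσ0.le (hαs k).1) ((hcd k).1.trans (by nlinarith))
  have hTM := IsNonmonotoneTerm.mem_Icc_windowMax ⟨hT0, hTrec, hTsum, hT0', hTlt, hTge⟩
    (fun k => Set.Ico_subset_Icc_self (hη k)) hdesc
  have hxK : ∀ k, x k ∈ {y | f y ≤ f (x 0)} :=
    le_apply_zero_of_le_windowMax fun k => (hdesc k).trans (hTM k).2
  obtain ⟨b, hb, hstep⟩ :=
    exists_pos_forall_armijo hK hC hKC hg hLip hL (by linarith : σ < 1) hc₁ (by linarith : 0 < c₂)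
  have hαb : ∀ k, min s (ρ * b) ≤ α k := fun k => hα k ▸
    min_le_mul_pow_of_isLeast (P := fun β => f (x k + β • d k) ≤ T k + σ * β * inner ℝ (g (x k)) (d k))
      hs0.le hρ0.le (hjk k) fun β hβ =>
        (hstep _ (hxK k) _ (hcd k).1 (hcd k).2 β hβ).trans (by linarith [(hTM k).1])
  refine tendsto_zero_of_le_windowMax_sub (N := N) (c := σ * min s (ρ * b) * c₁) (C := s * c₂)
    (by positivity) (fun k => norm_nonneg _)
    ((hK.uniformContinuousOn_of_continuous hfc.continuousOn).mono (Set.range_subset_iff.2 hxK))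
    ((hK.bddBelow_image hfc.continuousOn).mono
      (Set.range_subset_iff.2 fun k => Set.mem_image_of_mem f (hxK k)))
    (fun k => ?_) fun k => ?_
  · rw [hx k, dist_self_add_left, norm_smul, Real.norm_of_nonneg (hαs k).1, mul_assoc]
    exact mul_le_mul (hαs k).2 (hcd k).2 (norm_nonneg _) hs0.le
  · nlinarith [harmijo k, (hTM k).2, mul_le_mul_of_nonneg_left (hcd k).1 (mul_nonneg hσ0.le (hαs k).1),
      mul_le_mul_of_nonneg_right (hαb k) (by positivity : 0 ≤ σ * c₁ * ‖g (x k)‖ ^ 2)]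

/-- Theorem 1 (global convergence) for Algorithm NMLS with the nonmonotone
term (10), in which the reference value for the first `N` iterations is the
convex combination `f_k + η_{k-1}(T̄_k - f_k)`: under (H1)–(H3), the gradients
along the iterates tend to zero. -/
theorem nmls_gradient_tendsto_zero' (n : ℕ) (hn : 1 ≤ n)
    (f : EuclideanSpace ℝ (Fin n) → ℝ)
    (g : EuclideanSpace ℝ (Fin n) → EuclideanSpace ℝ (Fin n))
    (hf : ContDiff ℝ 1 f) (hg : ∀ y, HasGradientAt f (g y) y)
    (s ρ σ : ℝ) (hs : s ∈ Set.Ioc (0 : ℝ) 1) (hρ : ρ ∈ Set.Ioo (0 : ℝ) 1)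
    (hσ : σ ∈ Set.Ioo (0 : ℝ) (1 / 2))
    (N : ℕ) (hN : 1 ≤ N) (η : ℕ → ℝ) (hη : ∀ k, η k ∈ Set.Ico (0 : ℝ) 1)
    (x d : ℕ → EuclideanSpace ℝ (Fin n)) (α : ℕ → ℝ) (jk : ℕ → ℕ)
    (Tbar T : ℕ → ℝ)
    (hT0 : Tbar 0 = f (x 0))
    (hTrec : ∀ k, 1 ≤ k → k ≤ N - 1 →
      Tbar k = (1 - η (k - 1)) * f (x k) + η (k - 1) * Tbar (k - 1))
    (hTsum : ∀ k, N ≤ k → Tbar k =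
      (∑ j ∈ Finset.range N,
          (∏ i ∈ Finset.range j, η (k - 1 - i)) * (1 - η (k - j - 1)) * f (x (k - j)))
        + (∏ i ∈ Finset.range N, η (k - 1 - i)) * f (x (k - N)))
    (hT0' : T 0 = f (x 0))
    (hTlt : ∀ k, 1 ≤ k → k ≤ N - 1 → T k = f (x k) + η (k - 1) * (Tbar k - f (x k)))
    (hTge : ∀ k, N ≤ k → T k = max (Tbar k) (f (x k)))
    (hjk : ∀ k, IsLeast {j : ℕ | f (x k + (s * ρ ^ j) • d k) ≤
      T k + σ * (s * ρ ^ j) * (inner ℝ (g (x k)) (d k) : ℝ)} (jk k))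
    (hα : ∀ k, α k = s * ρ ^ (jk k))
    (hx : ∀ k, x (k + 1) = x k + α k • d k)
    (H1 : Bornology.IsBounded {y : EuclideanSpace ℝ (Fin n) | f y ≤ f (x 0)})
    (H2 : ∃ C : Set (EuclideanSpace ℝ (Fin n)), IsOpen C ∧ Convex ℝ C ∧
      {y : EuclideanSpace ℝ (Fin n) | f y ≤ f (x 0)} ⊆ C ∧
      ∃ L > (0 : ℝ), ∀ a ∈ C, ∀ b ∈ C, ‖g a - g b‖ ≤ L * ‖a - b‖)
    (H3 : ∃ c₁ c₂ : ℝ, 0 < c₁ ∧ c₁ < 1 ∧ 1 < c₂ ∧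
      ∀ k, (inner ℝ (g (x k)) (d k) : ℝ) ≤ -c₁ * ‖g (x k)‖ ^ 2 ∧
        ‖d k‖ ≤ c₂ * ‖g (x k)‖) :
    Filter.Tendsto (fun k => ‖g (x k)‖) Filter.atTop (nhds 0) :=
  nmls_gradient_tendsto_zero'_general n f g hg s ρ σ hs hρ hσ N η hη x d α jk Tbar T hT0 hTrec hTsum
    hT0' hTlt hTge hjk hα hx H1 H2 H3
end
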